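/- arXiv:2409.20504 — 3 statements merged into one kernel-verified Lean document; each statement's English description precedes it below -/
import Mathlib

section
/- Let 𝓕 be a sheaf of G-graded algebras on a topological space X, U an open set with open cover {U_α}, and f a multilinear G-graded polynomial. If f is a graded identity of 𝓕(U_α) for every α, then f is a graded identity of 𝓕(U). -/
/-- `G`-graded polynomial identities (in variables of degrees `deg`). -/
def IsGradedIdentity {F : Type*} [Field F] {G : Type*} {A : Type*} [Ring A] [Algebra F A]
    (𝒜 : G → Submodule F A) {n : ℕ} (deg : Fin n → G) (f : FreeAlgebra F (Fin n)) : Prop :=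
  ∀ v : Fin n → A, (∀ i, v i ∈ 𝒜 (deg i)) → FreeAlgebra.lift F v f = 0

/-- A polynomial is multilinear if it lies in the span of the monomials
`x_{σ(1)} ⋯ x_{σ(n)}`, `σ` a permutation. -/
def IsMultilinearPoly (F : Type*) [Field F] {n : ℕ} (f : FreeAlgebra F (Fin n)) : Prop :=
  f ∈ Submodule.span F
    {m : FreeAlgebra F (Fin n) |
      ∃ σ : Equiv.Perm (Fin n), m = (List.ofFn fun i => FreeAlgebra.ι F (σ i)).prod}

open TopologicalSpace in
/-- let `𝓕` (here `P`, `res`, `σ`) be a sheaf of `G`-graded algebras on `X`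
(we use its separation/monopresheaf axiom), `U` an open set covered by open sets `U_α ≤ U`
with `U = ⨆ α, U_α`, and `f` a multilinear `G`-graded polynomial. If `f` is a graded identity
of every `𝓕(U_α)` then `f` is a graded identity of `𝓕(U)`. -/
theorem graded_identity_glues (F : Type*) [Field F] [CharZero F] (G : Type*)
    (X : Type*) [TopologicalSpace X]
    (P : Opens X → Type*) [∀ U, Ring (P U)] [∀ U, Algebra F (P U)]
    (res : ∀ {U V : Opens X}, V ≤ U → (P U →ₐ[F] P V))
    (σ : ∀ U : Opens X, G → Submodule F (P U))
    (hres_graded : ∀ {U V : Opens X} (h : V ≤ U) (g : G) (p : P U),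
      p ∈ σ U g → res h p ∈ σ V g)
    (U : Opens X) (ι : Type*) (Uα : ι → Opens X) (hle : ∀ α, Uα α ≤ U)
    (hcover : U = ⨆ α, Uα α)
    -- separation axiom of the sheaf on this cover
    (hsep : ∀ s : P U, (∀ α, res (hle α) s = 0) → s = 0)
    {n : ℕ} (deg : Fin n → G) (f : FreeAlgebra F (Fin n)) (hml : IsMultilinearPoly F f)
    (hid : ∀ α, IsGradedIdentity (σ (Uα α)) deg f) :
    IsGradedIdentity (σ U) deg f := by
  intro v hv
  apply hsep
  intro α
  have key : (res (hle α)).comp (FreeAlgebra.lift F v) =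
      FreeAlgebra.lift F (fun i => res (hle α) (v i)) := by
    apply FreeAlgebra.hom_ext
    ext i
    simp
  have : res (hle α) (FreeAlgebra.lift F v f) =
      FreeAlgebra.lift F (fun i => res (hle α) (v i)) f := by
    rw [← key]; rfl
  rw [this]
  exact hid α _ (fun i => hres_graded (hle α) (deg i) (v i) (hv i))
end

section
/- Every derivation of the algebra UT_ℓ(F) of upper triangular ℓ×ℓ matrices over a field F is inner. -/
/-!
Subtracting `ad s` with `s = ∑ i, D (E_ii) E_ii` gives a derivation that kills the diagonal
matrix units. Since `E_ij = E_ii E_ij E_jj`, it then sends `E_ij` to a multiple `λ_ij E_ij`, and the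
Leibniz rule applied to `E_ij E_jk = E_ik` makes `λ` additive: `λ_ik = λ_ij + λ_jk`. Hence
`λ_ij = λ_0j - λ_0i`, and the remaining derivation is `ad t` for the diagonal matrix
`t = -∑ k, λ_0k E_kk`.
-/

def upperTriangularAlgebra (F : Type*) [Field F] (ℓ : ℕ) :
    Subalgebra F (Matrix (Fin ℓ) (Fin ℓ) F) where
  carrier := {M | M.BlockTriangular id}
  mul_mem' := fun ha hb => Matrix.BlockTriangular.mul ha hb
  add_mem' := fun ha hb => Matrix.BlockTriangular.add ha hb
  one_mem' := Matrix.blockTriangular_one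
  zero_mem' := Matrix.blockTriangular_zero
  algebraMap_mem' := fun c => by
    rw [Matrix.algebraMap_eq_diagonal]
    exact Matrix.blockTriangular_diagonal _

set_option synthInstance.maxHeartbeats 1000000
set_option maxHeartbeats 1000000

section Derivation

variable {R : Type*}

def IsDerivation [Mul R] [Add R] (D : R → R) : Prop :=
  ∀ a b, D (a * b) = D a * b + a * D b

variable [Ring R] {D : R → R}

lemma isDerivation_commutator (s : R) : IsDerivation fun m => s * m - m * s := by
  intro a b
  noncomm_ring

lemma IsDerivation.sub {D' : R → R} (hD : IsDerivation D) (hD' : IsDerivation D') :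
    IsDerivation fun m => D m - D' m := by
  intro a b
  simp only [hD a b, hD' a b]
  noncomm_ring

lemma IsDerivation.map_zero (hD : IsDerivation D) : D 0 = 0 := by
  simpa using hD 0 0

lemma IsDerivation.mul_apply_mul_self_eq_zero (hD : IsDerivation D) {e : R}
    (he : IsIdempotentElem e) : e * D e * e = 0 := by
  have h : e * D e * e = e * D e * e + e * D e * e :=
    calc e * D e * e = e * D (e * e) * e := by rw [he.eq]
      _ = e * D e * (e * e) + (e * e) * D e * e := by rw [hD]; noncomm_ring
      _ = e * D e * e + e * D e * e := by rw [he.eq]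
  exact left_eq_add.mp h

lemma IsDerivation.mul_apply_eq_neg_of_mul_eq_zero (hD : IsDerivation D) {e f : R}
    (hfe : f * e = 0) : f * D e = -(D f * e) := by
  have h := hD f e
  rw [hfe, hD.map_zero] at h
  exact eq_neg_of_add_eq_zero_right h.symm

lemma IsDerivation.apply_mul_mul_of_apply_eq_zero (hD : IsDerivation D) {e f : R}
    (he : D e = 0) (hf : D f = 0) (x : R) : D (e * x * f) = e * D x * f := by
  rw [hD, hD, he, hf]
  simp

lemma CompleteOrthogonalIdempotents.exists_isDerivation_apply_eq {ι : Type*} [Fintype ι]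
    [DecidableEq ι] {e : ι → R} (he : CompleteOrthogonalIdempotents e) (hD : IsDerivation D) :
    ∃ s, ∀ j, D (e j) = s * e j - e j * s := by
  refine ⟨∑ i, D (e i) * e i, fun j => ?_⟩
  have hright : (∑ i, D (e i) * e i) * e j = D (e j) * e j := by
    simp only [Finset.sum_mul, mul_assoc, he.mul_eq, mul_ite, mul_zero, Finset.sum_ite_eq',
      Finset.mem_univ, if_true]
  have hterm : ∀ i, e j * (D (e i) * e i) =
      (if i = j then D (e j) * e j else 0) - D (e j) * e i := by
    intro i
    by_cases hij : i = j
    · subst hij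
      rw [if_pos rfl, ← mul_assoc, hD.mul_apply_mul_self_eq_zero (he.idem i), sub_self]
    · rw [if_neg hij, zero_sub, ← mul_assoc, hD.mul_apply_eq_neg_of_mul_eq_zero
        (he.ortho (Ne.symm hij)), neg_mul, mul_assoc, (he.idem i).eq]
  have hleft : e j * ∑ i, D (e i) * e i = D (e j) * e j - D (e j) := by
    rw [Finset.mul_sum, Finset.sum_congr rfl fun i _ => hterm i, Finset.sum_sub_distrib,
      Finset.sum_ite_eq', if_pos (Finset.mem_univ j), ← Finset.mul_sum, he.complete, mul_one]
  rw [hright, hleft, sub_sub_cancel]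

end Derivation

namespace upperTriangularAlgebra

variable {F : Type*} [Field F] {ℓ : ℕ}

noncomputable def single (i j : Fin ℓ) : upperTriangularAlgebra F ℓ :=
  if h : i ≤ j then ⟨Matrix.single i j 1, Matrix.blockTriangular_single h 1⟩ else 0

lemma coe_single {i j : Fin ℓ} (h : i ≤ j) :
    (single i j : upperTriangularAlgebra F ℓ).val = Matrix.single i j 1 := by
  rw [single, dif_pos h]

lemma single_of_lt {i j : Fin ℓ} (h : j < i) : (single i j : upperTriangularAlgebra F ℓ) = 0 := by
  rw [single, dif_neg (not_le.mpr h)]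

lemma single_mul_single {i j k : Fin ℓ} (hij : i ≤ j) (hjk : j ≤ k) :
    (single i j * single j k : upperTriangularAlgebra F ℓ) = single i k := by
  ext1
  simp [coe_single, hij, hjk, hij.trans hjk]

lemma single_mul_single_of_ne {i j k l : Fin ℓ} (hij : i ≤ j) (hkl : k ≤ l) (hjk : j ≠ k) :
    (single i j * single k l : upperTriangularAlgebra F ℓ) = 0 := by
  ext1
  simp [coe_single, hij, hkl, hjk]

lemma single_mul_mul_single (x : upperTriangularAlgebra F ℓ) {i j : Fin ℓ} (hij : i ≤ j) :
    single i i * x * single j j = x.val i j • single i j := by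
  ext1
  simp [coe_single, hij]

lemma completeOrthogonalIdempotents_single_self :
    CompleteOrthogonalIdempotents fun i : Fin ℓ => (single i i : upperTriangularAlgebra F ℓ) := by
  refine CompleteOrthogonalIdempotents.iff_ortho_complete.mpr ⟨?_, ?_⟩
  · intro i j hij
    exact single_mul_single_of_ne le_rfl le_rfl hij
  · ext1
    simp [coe_single, Matrix.sum_single_one]

lemma sum_smul_single (x : upperTriangularAlgebra F ℓ) :
    ∑ i, ∑ j, x.val i j • single i j = x := by
  have hterm : ∀ i j, (x.val i j • single i j : upperTriangularAlgebra F ℓ).val =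
      Matrix.single i j (x.val i j) := by
    intro i j
    rcases le_or_gt i j with hij | hji
    · simp [coe_single hij]
    · simp [single_of_lt hji, x.2 hji]
  ext1
  simp only [AddSubmonoidClass.coe_finsetSum, hterm]
  exact (Matrix.matrix_eq_sum_single _).symm

lemma linearMap_ext_single {M : Type*} [AddCommGroup M] [Module F M]
    {f g : upperTriangularAlgebra F ℓ →ₗ[F] M}
    (h : ∀ i j, i ≤ j → f (single i j) = g (single i j)) : f = g := by
  ext x
  rw [← sum_smul_single x]
  simp only [map_sum, map_smul]
  refine Finset.sum_congr rfl fun i _ => Finset.sum_congr rfl fun j _ => ?_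
  rcases le_or_gt i j with hij | hji
  · rw [h i j hij]
  · rw [single_of_lt hji, map_zero, map_zero]

lemma sum_smul_single_self_mul_single (c : Fin ℓ → F) {i j : Fin ℓ} (hij : i ≤ j) :
    (∑ k, c k • single k k) * single i j = c i • (single i j : upperTriangularAlgebra F ℓ) := by
  rw [Finset.sum_mul, Finset.sum_eq_single_of_mem i (Finset.mem_univ i)]
  · rw [smul_mul_assoc, single_mul_single le_rfl hij]
  · intro k _ hki
    rw [smul_mul_assoc, single_mul_single_of_ne le_rfl hij hki, smul_zero]

lemma single_mul_sum_smul_single_self (c : Fin ℓ → F) {i j : Fin ℓ} (hij : i ≤ j) :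
    single i j * (∑ k, c k • single k k) = c j • (single i j : upperTriangularAlgebra F ℓ) := by
  rw [Finset.mul_sum, Finset.sum_eq_single_of_mem j (Finset.mem_univ j)]
  · rw [mul_smul_comm, single_mul_single hij le_rfl]
  · intro k _ hkj
    rw [mul_smul_comm, single_mul_single_of_ne hij le_rfl (Ne.symm hkj), smul_zero]

section Derivation

variable {D : upperTriangularAlgebra F ℓ →ₗ[F] upperTriangularAlgebra F ℓ}

lemma apply_single_eq_smul (hD : IsDerivation D) (hdiag : ∀ i, D (single i i) = 0)
    {i j : Fin ℓ} (hij : i ≤ j) : D (single i j) = (D (single i j)).val i j • single i j :=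
  calc D (single i j) = D (single i i * single i j * single j j) := by
        rw [single_mul_single le_rfl hij, single_mul_single hij le_rfl]
    _ = single i i * D (single i j) * single j j :=
        hD.apply_mul_mul_of_apply_eq_zero (hdiag i) (hdiag j) _
    _ = (D (single i j)).val i j • single i j := single_mul_mul_single _ hij

lemma apply_single_apply_eq_add (hD : IsDerivation D) (hdiag : ∀ i, D (single i i) = 0)
    {i j k : Fin ℓ} (hij : i ≤ j) (hjk : j ≤ k) :
    (D (single i k)).val i k = (D (single i j)).val i j + (D (single j k)).val j k := by
  have h : D (single i k) =
      ((D (single i j)).val i j + (D (single j k)).val j k) • single i k :=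
    calc D (single i k) = D (single i j * single j k) := by rw [single_mul_single hij hjk]
      _ = D (single i j) * single j k + single i j * D (single j k) := hD _ _
      _ = ((D (single i j)).val i j • single i j) * single j k +
            single i j * ((D (single j k)).val j k • single j k) := by
        rw [← apply_single_eq_smul hD hdiag hij, ← apply_single_eq_smul hD hdiag hjk]
      _ = _ := by rw [smul_mul_assoc, mul_smul_comm, single_mul_single hij hjk, add_smul]
  simpa [coe_single (hij.trans hjk)] using congr_arg (fun x => x.val i k) h

theorem exists_eq_commutator_of_isDerivation (hD : IsDerivation D)
    (hdiag : ∀ i, D (single i i) = 0) : ∃ t, ∀ m, D m = t * m - m * t := by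
  obtain ⟨t, ht⟩ : ∃ t, ∀ i j, i ≤ j → D (single i j) = t * single i j - single i j * t := by
    rcases ℓ with _ | n
    · exact ⟨0, fun i => i.elim0⟩
    let c k := -(D (single 0 k)).val 0 k
    refine ⟨∑ k, c k • single k k, fun i j hij => ?_⟩
    rw [sum_smul_single_self_mul_single c hij, single_mul_sum_smul_single_self c hij, ← sub_smul,
      apply_single_eq_smul hD hdiag hij]
    congr 1
    linear_combination -apply_single_apply_eq_add hD hdiag (Fin.zero_le i) hij
  have hext : D = LinearMap.mulLeft F t - LinearMap.mulRight F t :=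
    linearMap_ext_single fun i j hij => by simpa using ht i j hij
  exact ⟨t, fun m => by simpa using LinearMap.congr_fun hext m⟩

end Derivation

end upperTriangularAlgebra

/-- every derivation of the algebra `UT_ℓ(F)` of upper triangular `ℓ×ℓ` matrices
over a field `F` is inner: `D = ad(s)` for some `s ∈ UT_ℓ(F)`. -/
theorem upper_triangular_derivations_inner (F : Type*) [Field F] (ℓ : ℕ)
    (D : upperTriangularAlgebra F ℓ →ₗ[F] upperTriangularAlgebra F ℓ)
    (hD : ∀ a b, D (a * b) = D a * b + a * D b) :
    ∃ s : upperTriangularAlgebra F ℓ, ∀ m, D m = s * m - m * s := by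
  obtain ⟨s, hs⟩ :=
    upperTriangularAlgebra.completeOrthogonalIdempotents_single_self.exists_isDerivation_apply_eq hD
  let D₁ := D - (LinearMap.mulLeft F s - LinearMap.mulRight F s)
  have hD₁ : IsDerivation D₁ := IsDerivation.sub hD (isDerivation_commutator s)
  obtain ⟨t, ht⟩ := upperTriangularAlgebra.exists_eq_commutator_of_isDerivation hD₁ fun i => by
    simp [D₁, hs i]
  refine ⟨s + t, fun m => ?_⟩
  have hm : D m - (s * m - m * s) = t * m - m * t := by simpa [D₁] using ht m
  rw [sub_eq_iff_eq_add.mp hm]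
  noncomm_ring
end

section
/- On the space Ω^even of even-degree polynomial differential forms on ℂⁿ, the Fedosov product α ∗ β := α ∧ β + (1/2) dα ∧ dβ is associative, and its commutator satisfies [α, β]_∗ = dα ∧ dβ; in particular [[α,β]_∗, γ]_∗ = 0 for all α, β, γ ∈ Ω^even, so (Ω^even, ∗) satisfies the PI-identity [[x₁,x₂],x₃] ≡ 0. -/
/-- The Fedosov product `α ∗ β = α ∧ β + ½ dα ∧ dβ` on an algebra `Ω` (whose multiplication
plays the role of the wedge product) equipped with a differential `d`. -/
noncomputable def fedosov {Ω : Type*} [Ring Ω] [Algebra ℂ Ω] (d : Ω →ₗ[ℂ] Ω) (a b : Ω) : Ω :=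
  a * b + (2⁻¹ : ℂ) • (d a * d b)

/-- let `Ω = Ω⁰ ⊕ Ω¹` be the algebra of polynomial differential forms on `ℂⁿ`
(formalized as any ℤ₂-graded supercommutative ℂ-algebra, graded by even/odd form degree, with
an odd differential `d` satisfying `d² = 0` and the super-Leibniz rule — the algebra
`Λ(ℂⁿ)* ⊗ ℂ[x₁,…,xₙ]` with the exterior derivative being the motivating instance). Then on the
even part `Ω⁰` the Fedosov product `α ∗ β = α∧β + ½ dα∧dβ` is associative, its commutator is
`[α,β]_∗ = dα ∧ dβ`, and all triple commutators vanish: `[[α,β]_∗, γ]_∗ = 0`, so `(Ω⁰, ∗)`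
satisfies the polynomial identity `[[x₁,x₂],x₃] ≡ 0`. -/
theorem fedosov_product_even_forms
    (Ω : Type*) [Ring Ω] [Algebra ℂ Ω]
    (Ω0 Ω1 : Submodule ℂ Ω)
    (hdecomp : DirectSum.IsInternal (fun i : ZMod 2 => if i = 0 then Ω0 else Ω1))
    (hone : (1 : Ω) ∈ Ω0)
    (hmul00 : ∀ a ∈ Ω0, ∀ b ∈ Ω0, a * b ∈ Ω0)
    (hmul01 : ∀ a ∈ Ω0, ∀ b ∈ Ω1, a * b ∈ Ω1)
    (hmul10 : ∀ a ∈ Ω1, ∀ b ∈ Ω0, a * b ∈ Ω1)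
    (hmul11 : ∀ a ∈ Ω1, ∀ b ∈ Ω1, a * b ∈ Ω0)
    (hcomm0 : ∀ a ∈ Ω0, ∀ b : Ω, a * b = b * a)
    (hanticomm : ∀ a ∈ Ω1, ∀ b ∈ Ω1, a * b = -(b * a))
    (d : Ω →ₗ[ℂ] Ω)
    (hd01 : ∀ a ∈ Ω0, d a ∈ Ω1) (hd10 : ∀ a ∈ Ω1, d a ∈ Ω0)
    (hdd : ∀ a : Ω, d (d a) = 0)
    (hleib0 : ∀ a ∈ Ω0, ∀ b : Ω, d (a * b) = d a * b + a * d b)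
    (hleib1 : ∀ a ∈ Ω1, ∀ b : Ω, d (a * b) = d a * b - a * d b) :
    (∀ α ∈ Ω0, ∀ β ∈ Ω0, ∀ γ ∈ Ω0,
      fedosov d (fedosov d α β) γ = fedosov d α (fedosov d β γ)) ∧
    (∀ α ∈ Ω0, ∀ β ∈ Ω0, fedosov d α β - fedosov d β α = d α * d β) ∧
    (∀ α ∈ Ω0, ∀ β ∈ Ω0, ∀ γ ∈ Ω0,
      fedosov d (fedosov d α β - fedosov d β α) γ
        - fedosov d γ (fedosov d α β - fedosov d β α) = 0) := by
  have dstar : ∀ a ∈ Ω0, ∀ b ∈ Ω0, d (fedosov d a b) = d a * b + a * d b := by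
    intro a ha b hb
    simp only [fedosov, map_add, map_smul, hleib0 a ha b,
      hleib1 (d a) (hd01 a ha) (d b), hdd, zero_mul, mul_zero, sub_zero, zero_sub,
      smul_zero, add_zero]
  have hcomm : ∀ a ∈ Ω0, ∀ b ∈ Ω0, fedosov d a b - fedosov d b a = d a * d b := by
    intro a ha b hb
    simp only [fedosov]
    rw [hcomm0 a ha b, hanticomm (d b) (hd01 b hb) (d a) (hd01 a ha)]
    module
  refine ⟨?_, hcomm, ?_⟩
  · intro α hα β hβ γ hγ
    rw [show fedosov d (fedosov d α β) γ
        = fedosov d α β * γ + (2⁻¹ : ℂ) • (d (fedosov d α β) * d γ) from rfl,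
      show fedosov d α (fedosov d β γ)
        = α * fedosov d β γ + (2⁻¹ : ℂ) • (d α * d (fedosov d β γ)) from rfl,
      dstar α hα β hβ, dstar β hβ γ hγ]
    simp only [fedosov, mul_add, add_mul, smul_mul_assoc, mul_smul_comm, mul_assoc, smul_add]
    abel
  · intro α hα β hβ γ hγ
    rw [hcomm α hα β hβ]
    have hx : d α * d β ∈ Ω0 := hmul11 _ (hd01 α hα) _ (hd01 β hβ)
    have hdx : d (d α * d β) = 0 := by
      rw [hleib1 (d α) (hd01 α hα) (d β), hdd, hdd, zero_mul, mul_zero, sub_zero]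
    simp only [fedosov, hdx, zero_mul, mul_zero, smul_zero, add_zero,
      hcomm0 _ hx γ, sub_self]
end
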